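/- If a graph G admits an interval edge-coloring (a proper edge-coloring with consecutive integers such that the colors on edges incident to each vertex form an interval of integers), then the chromatic index of G equals its maximum degree Δ(G). -/

import Mathlib

open SimpleGraph

/-- A proper edge-coloring: edges sharing a vertex get distinct colors. -/
def EProper {V : Type*} (G : SimpleGraph V) (c : Sym2 V → ℕ) : Prop :=
  ∀ v a b, G.Adj v a → G.Adj v b → a ≠ b → c s(v, a) ≠ c s(v, b)

/-- The spectrum of a vertex: set of colors on incident edges. -/
def specS {V : Type*} (G : SimpleGraph V) (c : Sym2 V → ℕ) (v : V) : Set ℕ :=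
  {k | ∃ u, G.Adj v u ∧ c s(v, u) = k}

/-- An interval t-coloring: proper, uses exactly the colors 1..t, and each
vertex's spectrum is an interval of integers. -/
def IsIntCol {V : Type*} (G : SimpleGraph V) (c : Sym2 V → ℕ) (t : ℕ) : Prop :=
  EProper G c ∧
  (∀ e ∈ G.edgeSet, 1 ≤ c e ∧ c e ≤ t) ∧
  (∀ k, 1 ≤ k → k ≤ t → ∃ e ∈ G.edgeSet, c e = k) ∧
  (∀ v, ∀ a ∈ specS G c v, ∀ b ∈ specS G c v,
     ∀ k, a ≤ k → k ≤ b → k ∈ specS G c v)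

/-- Interval colorability. -/
def IntColorable {V : Type*} (G : SimpleGraph V) : Prop :=
  ∃ t c, IsIntCol G c t

/-- Least t admitting an interval t-coloring. -/
noncomputable def wInt {V : Type*} (G : SimpleGraph V) : ℕ :=
  sInf {t | ∃ c, IsIntCol G c t}

/-- Greatest t admitting an interval t-coloring. -/
noncomputable def WInt {V : Type*} (G : SimpleGraph V) : ℕ :=
  sSup {t | ∃ c, IsIntCol G c t}

/-- The set of values `max S(v,c)` over vertices v. -/
def maxSpecSet {V : Type*} (G : SimpleGraph V) (c : Sym2 V → ℕ) : Set ℕ :=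
  {m | ∃ v, sSup (specS G c v) = m}

/-- The sorted sequence of largest incident colors is continuous: every integer
between its minimum and maximum is attained. -/
def MaxSpecContinuous {V : Type*} (G : SimpleGraph V) (c : Sym2 V → ℕ) : Prop :=
  ∀ k, sInf (maxSpecSet G c) ≤ k → k ≤ sSup (maxSpecSet G c) → k ∈ maxSpecSet G c

/-- The composition (lexicographic product) G[H]. -/
def lexComp {V W : Type*} (G : SimpleGraph V) (H : SimpleGraph W) :
    SimpleGraph (V × W) where
  Adj a b := G.Adj a.1 b.1 ∨ (a.1 = b.1 ∧ H.Adj a.2 b.2)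
  symm := by
    constructor
    intro a b h
    rcases h with h | ⟨h1, h2⟩
    · exact Or.inl h.symm
    · exact Or.inr ⟨h1.symm, h2.symm⟩
  loopless := by
    constructor
    intro a h
    rcases h with h | ⟨_, h2⟩
    · exact G.ne_of_adj h rfl
    · exact H.ne_of_adj h2 rfl

/-- The chromatic index: least number of colors in a proper edge-coloring. -/
noncomputable def chromIndex {V : Type*} (G : SimpleGraph V) : ℕ :=
  sInf {k | ∃ c, EProper G c ∧ ∀ e ∈ G.edgeSet, c e < k}

/-
Reducing the colors of an interval coloring modulo Δ(G) gives a proper coloring with Δ(G)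
colors: two edges at a vertex v carry distinct colors of the interval spectrum of v, which has
at most deg v ≤ Δ(G) elements, so their colors differ by less than Δ(G) and stay distinct
modulo Δ(G). Conversely no proper coloring uses fewer than Δ(G) colors.
-/

namespace EProper

variable {V : Type*} {G : SimpleGraph V} {c : Sym2 V → ℕ}

theorem degree_le (hc : EProper G c) {k : ℕ} (hk : ∀ e ∈ G.edgeSet, c e < k) (v : V)
    [Fintype (G.neighborSet v)] : G.degree v ≤ k := by
  have hmaps : Set.MapsTo (fun u => c s(v, u)) (G.neighborFinset v) (Finset.range k) :=
    fun u hu => Finset.mem_range.2 (hk _ ((G.mem_neighborFinset v u).1 hu))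
  have hinj : Set.InjOn (fun u => c s(v, u)) (G.neighborFinset v) := fun a ha b hb hab => by
    by_contra hne
    exact hc v a b ((G.mem_neighborFinset v a).1 ha) ((G.mem_neighborFinset v b).1 hb) hne hab
  simpa using Finset.card_le_card_of_injOn _ hmaps hinj

end EProper

theorem maxDegree_le_chromIndex {V : Type*} [Fintype V] (G : SimpleGraph V)
    [DecidableRel G.Adj] : G.maxDegree ≤ chromIndex G := by
  classical
  -- `sInf ∅ = 0`, so `le_csInf` needs some proper coloring: number the edges injectively.
  have hinj : EProper G fun e => (Fintype.equivFin (Sym2 V) e : ℕ) :=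
    fun v a b _ _ hab h => hab (Sym2.congr_right.1 ((Fintype.equivFin _).injective (Fin.ext h)))
  refine le_csInf ⟨_, _, hinj, fun e _ => (Fintype.equivFin _ e).isLt⟩ ?_
  rintro k ⟨c, hc, hk⟩
  exact G.maxDegree_le_of_forall_degree_le k fun v => hc.degree_le hk v

namespace IsIntCol

variable {V : Type*} {G : SimpleGraph V} {c : Sym2 V → ℕ} {t : ℕ}

theorem abs_sub_lt_degree (hc : IsIntCol G c t) {v : V} [Fintype (G.neighborSet v)]
    {x y : ℕ} (hx : x ∈ specS G c v) (hy : y ∈ specS G c v) :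
    |(y : ℤ) - x| < G.degree v := by
  wlog hxy : x ≤ y generalizing x y
  · rw [abs_sub_comm]
    exact this hy hx (by omega)
  have hsub : Finset.Icc x y ⊆ (G.neighborFinset v).image (fun u => c s(v, u)) := by
    intro k hk
    obtain ⟨u, hu, rfl⟩ := hc.2.2.2 v x hx y hy k (Finset.mem_Icc.1 hk).1 (Finset.mem_Icc.1 hk).2
    exact Finset.mem_image_of_mem _ ((G.mem_neighborFinset v u).2 hu)
  have hcard := (Finset.card_le_card hsub).trans Finset.card_image_le
  rw [Nat.card_Icc, card_neighborFinset_eq_degree] at hcard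
  rw [abs_of_nonneg (by omega)]
  omega

variable [Fintype V] [DecidableRel G.Adj]

theorem eProper_mod_maxDegree (hc : IsIntCol G c t) :
    EProper G fun e => c e % G.maxDegree := by
  intro v a b ha hb hab hmod
  refine hc.1 v a b ha hb hab (Nat.ModEq.eq_of_abs_lt hmod ?_)
  exact (hc.abs_sub_lt_degree ⟨a, ha, rfl⟩ ⟨b, hb, rfl⟩).trans_le
    (by exact_mod_cast G.degree_le_maxDegree v)

theorem chromIndex_le_maxDegree (hc : IsIntCol G c t) : chromIndex G ≤ G.maxDegree := by
  refine Nat.sInf_le ⟨_, hc.eProper_mod_maxDegree, fun e he => Nat.mod_lt _ ?_⟩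
  induction e using Sym2.ind with
  | h u w => exact ((G.degree_pos_iff_exists_adj u).2 ⟨w, he⟩).trans_le (G.degree_le_maxDegree u)

end IsIntCol

/-- If G admits an interval coloring then χ'(G) = Δ(G). -/
theorem stmt0 {V : Type*} [Fintype V] (G : SimpleGraph V) [DecidableRel G.Adj]
    (h : IntColorable G) : chromIndex G = G.maxDegree := by
  obtain ⟨t, c, hc⟩ := h
  exact le_antisymm hc.chromIndex_le_maxDegree (maxDegree_le_chromIndex G)
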